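/- Fix an alphabet Σ and labelled transition systems γ : X → Set (Σ × X) and δ : Y → Set (Σ × Y). With M X = Set (List Σ × X), η_X(x) = {([], x)}, f*(S) = {(u ++ v, y) | ∃ x, (u, x) ∈ S ∧ (v, y) ∈ f x}, α_X(S) = {([a], x) | (a, x) ∈ S}, and iterates γ^(0) = η_X, γ^(n+1) = (α_X ∘ γ)* ∘ γ^(n) (similarly for δ), two states x ∈ X and y ∈ Y are α-trace equivalent (i.e. the images of γ^(n)(x) and δ^(n)(y) under M! agree for all n, where ! is the map to a one-element type) if and only if they are trace equivalent in the classical sense: {u ∈ List Σ | ∃ z, x →^u z} = {u ∈ List Σ | ∃ z, y →^u z}. -/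
import Mathlib


variable {A : Type*}

/-- The unit of the monad `M X = Set (List A × X)`. -/
def traceEta {X : Type*} (x : X) : Set (List A × X) := {([], x)}

/-- The Kleisli extension of `f : X → Set (List A × Y)`. -/
def traceStar {X Y : Type*} (f : X → Set (List A × Y)) (S : Set (List A × X)) :
    Set (List A × Y) :=
  {p | ∃ u v x y, p = (u ++ v, y) ∧ (u, x) ∈ S ∧ (v, y) ∈ f x}

/-- The trace semantics `α_X : Set (A × X) → Set (List A × X)`. -/
def traceAlpha {X : Type*} (S : Set (A × X)) : Set (List A × X) :=
  {p | ∃ a x, p = ([a], x) ∧ (a, x) ∈ S}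

/-- The iterates `γ⁽⁰⁾ = η`, `γ⁽ⁿ⁺¹⁾ = (α ∘ γ)* ∘ γ⁽ⁿ⁾`. -/
def traceIter {X : Type*} (γ : X → Set (A × X)) : ℕ → X → Set (List A × X)
  | 0 => traceEta
  | n + 1 => traceStar (traceAlpha ∘ γ) ∘ traceIter γ n

/-- `M(!)` : forget the state components of a set of pretraces. -/
def traceBang {X : Type*} (S : Set (List A × X)) : Set (List A × PUnit) :=
  (fun p => (p.1, PUnit.unit)) '' S

/-- The extension `x →^u y` of the transition relation of an LTS to words. -/
inductive Steps {X : Type*} (γ : X → Set (A × X)) : X → List A → X → Prop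
  | nil (x : X) : Steps γ x [] x
  | cons {x z y : X} {a : A} {u : List A} :
      (a, z) ∈ γ x → Steps γ z u y → Steps γ x (a :: u) y

lemma steps_snoc {X : Type*} {γ : X → Set (A × X)} {x z y : X} {u : List A} {a : A}
    (h : Steps γ x u z) (ha : (a, y) ∈ γ z) : Steps γ x (u ++ [a]) y := by
  induction h with
  | nil => exact Steps.cons ha (Steps.nil y)
  | cons hb _ ih => exact Steps.cons hb (ih ha)

lemma steps_snoc_inv {X : Type*} {γ : X → Set (A × X)} {z : X} {a : A} :
    ∀ {u : List A} {x : X}, Steps γ x (u ++ [a]) z →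
      ∃ w, Steps γ x u w ∧ (a, z) ∈ γ w := by
  intro u
  induction u with
  | nil =>
    intro x h
    rcases h with _ | ⟨hb, hs⟩
    cases hs
    exact ⟨_, Steps.nil x, hb⟩
  | cons b v ih =>
    intro x h
    rcases h with _ | ⟨hb, hs⟩
    obtain ⟨w, hw, hmem⟩ := ih hs
    exact ⟨w, Steps.cons hb hw, hmem⟩

lemma mem_traceIter {X : Type*} {γ : X → Set (A × X)} :
    ∀ (n : ℕ) (x : X) (u : List A) (z : X),
      (u, z) ∈ traceIter γ n x ↔ Steps γ x u z ∧ u.length = n := by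
  intro n
  induction n with
  | zero =>
    intro x u z
    constructor
    · rintro ⟨rfl, rfl⟩
      exact ⟨Steps.nil x, rfl⟩
    · rintro ⟨h, hl⟩
      cases u with
      | nil => cases h; rfl
      | cons _ _ => simp at hl
  | succ n ih =>
    intro x u z
    constructor
    · rintro ⟨u', v, x', y', hp, hmem, hv⟩
      obtain ⟨a, w, hva, hw⟩ := hv
      cases hva
      cases hp
      obtain ⟨hs, hl⟩ := (ih x u' x').1 hmem
      refine ⟨steps_snoc hs hw, by simp [hl]⟩
    · rintro ⟨h, hl⟩
      obtain ⟨v, a, rfl⟩ : ∃ v a, u = v ++ [a] := by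
        rcases List.eq_nil_or_concat u with rfl | ⟨v, a, rfl⟩
        · simp at hl
        · exact ⟨v, a, by simp⟩
      obtain ⟨w, hw, hmem⟩ := steps_snoc_inv h
      refine ⟨v, [a], w, z, rfl, (ih x v w).2 ⟨hw, by simpa using hl⟩, ⟨a, z, rfl, hmem⟩⟩

lemma mem_traceBang_iter {X : Type*} {γ : X → Set (A × X)} (n : ℕ) (x : X) (u : List A) :
    (u, PUnit.unit) ∈ traceBang (traceIter γ n x) ↔
      (∃ z, Steps γ x u z) ∧ u.length = n := by
  constructor
  · rintro ⟨⟨v, w⟩, hm, hp⟩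
    obtain ⟨hs, hl⟩ := (mem_traceIter n x v w).1 hm
    cases hp
    exact ⟨⟨w, hs⟩, hl⟩
  · rintro ⟨⟨z, hs⟩, hl⟩
    exact ⟨(u, z), (mem_traceIter n x u z).2 ⟨hs, hl⟩, rfl⟩

/-- two states of LTSs are `α`-trace equivalent iff they are trace
equivalent in the classical sense. -/
theorem stmt5 {X Y : Type*} (γ : X → Set (A × X)) (δ : Y → Set (A × Y))
    (x : X) (y : Y) :
    (∀ n, traceBang (traceIter γ n x) = traceBang (traceIter δ n y)) ↔
      {u : List A | ∃ z, Steps γ x u z} = {u : List A | ∃ z, Steps δ y u z} := by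
  constructor
  · intro h
    ext u
    constructor
    · rintro ⟨z, hs⟩
      have := (h u.length ▸ (mem_traceBang_iter u.length x u).2 ⟨⟨z, hs⟩, rfl⟩)
      exact ((mem_traceBang_iter u.length y u).1 this).1
    · rintro ⟨z, hs⟩
      have := ((h u.length).symm ▸ (mem_traceBang_iter u.length y u).2 ⟨⟨z, hs⟩, rfl⟩)
      exact ((mem_traceBang_iter u.length x u).1 this).1
  · intro h n
    ext ⟨u, ⟨⟩⟩
    rw [mem_traceBang_iter, mem_traceBang_iter]
    constructor
    · rintro ⟨hu, hl⟩
      exact ⟨Set.ext_iff.1 h u |>.1 hu, hl⟩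
    · rintro ⟨hu, hl⟩
      exact ⟨Set.ext_iff.1 h u |>.2 hu, hl⟩
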